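/- Let a, b be real numbers with 0 < a < 1 and 0 < b < 1. Then lim_{c→0⁺} Γ(c)·(₃F₂(a, b, c; 1, 1; 1) − 1) = ab·₄F₃(1+a, 1+b, 1, 1; 2, 2, 2; 1). -/

import Mathlib

/-!
Since `(c)ₙ₊₁ = c · (c+1)ₙ` and `c · Γ(c) = Γ(c+1)`, one has
`Γ(c) · (₃F₂(a,b,c;1,1;1) − 1) = Γ(c+1) · ∑ₘ Tₘ(c)` with
`Tₘ(c) = (c+1)ₘ (a)ₘ₊₁ (b)ₘ₊₁ / ((m+1)!)³`, a polynomial in `c` whose value at `c = 0` is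
`ab` times the `m`-th term of `₄F₃(1+a,1+b,1,1;2,2,2;1)`. The limit passes inside the sum by
dominated convergence: multiplying `1 − (1−s)/(k+1) ≤ ((k+1)/(k+2))^(1−s)` over `1 ≤ k ≤ m` gives
`(s+1)ₘ ≤ (m+1)! · (2/(m+2))^(1−s)` for `0 ≤ s ≤ 1`, hence `Tₘ(c) ≤ ab · (2/(m+2))^(3−a−b−c)`,
which is summable uniformly for small `c` because `a + b < 2`.
-/

set_option autoImplicit false

open Filter
open scoped Topology

/-- Pochhammer symbol `(a)_n = a(a+1)⋯(a+n−1)` for a real number. -/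
noncomputable def pochR (a : ℝ) (n : ℕ) : ℝ := ∏ k ∈ Finset.range n, (a + k)

/-- Generalized hypergeometric series `₃F₂(a₁,a₂,a₃;b₁,b₂;x)` (real). -/
noncomputable def hyp3F2 (a₁ a₂ a₃ b₁ b₂ x : ℝ) : ℝ :=
  ∑' n : ℕ, (pochR a₁ n * pochR a₂ n * pochR a₃ n) /
    (pochR b₁ n * pochR b₂ n * (n.factorial : ℝ)) * x ^ n

/-- Generalized hypergeometric series `₄F₃(a₁,a₂,a₃,a₄;b₁,b₂,b₃;x)` (real). -/
noncomputable def hyp4F3 (a₁ a₂ a₃ a₄ b₁ b₂ b₃ x : ℝ) : ℝ :=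
  ∑' n : ℕ, (pochR a₁ n * pochR a₂ n * pochR a₃ n * pochR a₄ n) /
    (pochR b₁ n * pochR b₂ n * pochR b₃ n * (n.factorial : ℝ)) * x ^ n

lemma pochR_zero (s : ℝ) : pochR s 0 = 1 := rfl

lemma pochR_succ_right (s : ℝ) (n : ℕ) : pochR s (n + 1) = pochR s n * (s + n) :=
  Finset.prod_range_succ _ n

lemma pochR_succ_left (s : ℝ) (n : ℕ) : pochR s (n + 1) = s * pochR (s + 1) n := by
  rw [pochR, Finset.prod_range_succ', pochR, mul_comm]
  push_cast
  simp only [add_zero, add_assoc, add_comm (1 : ℝ)]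

lemma pochR_nonneg {s : ℝ} (hs : 0 ≤ s) (n : ℕ) : 0 ≤ pochR s n :=
  Finset.prod_nonneg fun k _ => by positivity

lemma pochR_one (n : ℕ) : pochR 1 n = n.factorial := by
  induction n with
  | zero => simp [pochR_zero]
  | succ n ih => rw [pochR_succ_right, ih, Nat.factorial_succ]; push_cast; ring

lemma pochR_two (n : ℕ) : pochR 2 n = (n + 1).factorial := by
  have h := pochR_succ_left 1 n
  rwa [one_add_one_eq_two, one_mul, pochR_one, eq_comm] at h

lemma continuous_pochR (n : ℕ) : Continuous fun s => pochR s n := by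
  unfold pochR; fun_prop

lemma one_sub_mul_le_inv_one_add_rpow {u r : ℝ} (hu : 0 ≤ u) (hr : 0 ≤ r) :
    1 - r * u ≤ (1 + u)⁻¹ ^ r := by
  have hlog : Real.log (1 + u) ≤ u := by
    linarith [Real.log_le_sub_one_of_pos (by linarith : 0 < 1 + u)]
  rw [Real.rpow_def_of_pos (by positivity), Real.log_inv]
  nlinarith [Real.add_one_le_exp (-Real.log (1 + u) * r)]

lemma pochR_add_one_le {s : ℝ} (hs0 : 0 ≤ s) (hs1 : s ≤ 1) (m : ℕ) :
    pochR (s + 1) m ≤ (2 / ((m : ℝ) + 2)) ^ (1 - s) * (m + 1).factorial := by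
  induction m with
  | zero => simp [pochR_zero]
  | succ m ih =>
    have hstep : ((m : ℝ) + 1 + s) / (m + 2) ≤ ((m + 2) / (m + 3)) ^ (1 - s) := by
      have h := one_sub_mul_le_inv_one_add_rpow (u := 1 / (m + 2)) (r := 1 - s) (by positivity)
        (by linarith)
      convert h using 1
      · field_simp; ring
      · congr 1; field_simp; ring
    have hpos := pochR_nonneg (by linarith : 0 ≤ s + 1) m
    calc pochR (s + 1) (m + 1) = pochR (s + 1) m * (((m : ℝ) + 1 + s) / (m + 2)) * (m + 2) := by
          rw [pochR_succ_right]; field_simp; ring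
      _ ≤ (2 / ((m : ℝ) + 2)) ^ (1 - s) * (m + 1).factorial * (((m : ℝ) + 2) / (m + 3)) ^ (1 - s)
            * (m + 2) := by gcongr
      _ = (2 / ((m + 1 : ℕ) + 2 : ℝ)) ^ (1 - s) * (m + 1 + 1).factorial := by
          rw [mul_right_comm _ _ (_ ^ _), ← Real.mul_rpow (by positivity) (by positivity),
            Nat.factorial_succ (m + 1)]
          push_cast
          field_simp
          ring_nf

lemma summable_two_div_nat_add_two_rpow {q : ℝ} (hq : 1 < q) :
    Summable fun m : ℕ => (2 / ((m : ℝ) + 2)) ^ q := by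
  have h := (summable_nat_add_iff 2).mpr (Real.summable_one_div_nat_rpow.mpr hq)
  refine (h.mul_left (2 ^ q)).congr fun m => ?_
  rw [Real.div_rpow (by norm_num) (by positivity)]
  push_cast
  ring

/-- `c * tailCoeff a b c m` is the `(m+1)`-st term of `₃F₂(a,b,c;1,1;1)`. -/
noncomputable def tailCoeff (a b c : ℝ) (m : ℕ) : ℝ :=
  pochR (c + 1) m * pochR a (m + 1) * pochR b (m + 1) / ((m + 1).factorial : ℝ) ^ 3

section tailCoeff

variable {a b c : ℝ}

lemma tailCoeff_nonneg (ha : 0 ≤ a) (hb : 0 ≤ b) (hc : 0 ≤ c) (m : ℕ) :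
    0 ≤ tailCoeff a b c m := by
  have := pochR_nonneg (by linarith : 0 ≤ c + 1) m
  have := pochR_nonneg ha (m + 1)
  have := pochR_nonneg hb (m + 1)
  unfold tailCoeff
  positivity

lemma tailCoeff_le (ha0 : 0 ≤ a) (ha1 : a ≤ 1) (hb0 : 0 ≤ b) (hb1 : b ≤ 1) (hc0 : 0 ≤ c)
    (hc1 : c ≤ 1) {q : ℝ} (hq : q ≤ 3 - a - b - c) (m : ℕ) :
    tailCoeff a b c m ≤ a * b * (2 / ((m : ℝ) + 2)) ^ q := by
  set x : ℝ := 2 / ((m : ℝ) + 2)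
  have hx0 : 0 < x := by positivity
  have hx1 : x ≤ 1 := by rw [div_le_one (by positivity)]; linarith [m.cast_nonneg (α := ℝ)]
  have hF : (0 : ℝ) < (m + 1).factorial := by positivity
  have hc := pochR_add_one_le hc0 hc1 m
  have ha := pochR_add_one_le ha0 ha1 m
  have hb := pochR_add_one_le hb0 hb1 m
  have := pochR_nonneg (by linarith : 0 ≤ c + 1) m
  have := pochR_nonneg (by linarith : 0 ≤ a + 1) m
  have := pochR_nonneg (by linarith : 0 ≤ b + 1) m
  calc tailCoeff a b c m
      = a * b * (pochR (c + 1) m * pochR (a + 1) m * pochR (b + 1) m)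
          / ((m + 1).factorial : ℝ) ^ 3 := by
        rw [tailCoeff, pochR_succ_left a, pochR_succ_left b]; ring
    _ ≤ a * b * (x ^ (1 - c) * (m + 1).factorial * (x ^ (1 - a) * (m + 1).factorial)
          * (x ^ (1 - b) * (m + 1).factorial)) / ((m + 1).factorial : ℝ) ^ 3 := by gcongr
    _ = a * b * x ^ (3 - a - b - c) := by
        rw [show 3 - a - b - c = (1 - c) + (1 - a) + (1 - b) by ring,
          Real.rpow_add hx0, Real.rpow_add hx0]
        field_simp
    _ ≤ a * b * x ^ q :=
        mul_le_mul_of_nonneg_left (Real.rpow_le_rpow_of_exponent_ge hx0 hx1 hq) (by positivity)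

lemma summable_tailCoeff (ha0 : 0 ≤ a) (ha1 : a ≤ 1) (hb0 : 0 ≤ b) (hb1 : b ≤ 1) (hc0 : 0 ≤ c)
    (hc1 : c ≤ 1) (habc : a + b + c < 2) : Summable (tailCoeff a b c) :=
  Summable.of_nonneg_of_le (tailCoeff_nonneg ha0 hb0 hc0)
    (tailCoeff_le ha0 ha1 hb0 hb1 hc0 hc1 le_rfl)
    ((summable_two_div_nat_add_two_rpow (by linarith)).mul_left (a * b))

lemma continuous_tailCoeff (m : ℕ) : Continuous fun c => tailCoeff a b c m := by
  unfold tailCoeff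
  have := (continuous_pochR m).comp (continuous_add_const (1 : ℝ))
  fun_prop

lemma tsum_tailCoeff_zero :
    ∑' m, tailCoeff a b 0 m = a * b * hyp4F3 (1 + a) (1 + b) 1 1 2 2 2 1 := by
  rw [hyp4F3, ← tsum_mul_left]
  refine tsum_congr fun m => ?_
  have : ((m + 1).factorial : ℝ) ≠ 0 := by positivity
  rw [tailCoeff, zero_add, pochR_succ_left a, pochR_succ_left b, pochR_one, pochR_two, add_comm 1 a,
    add_comm 1 b, one_pow]
  field_simp

lemma hyp3F2_sub_one_eq (hs : Summable (tailCoeff a b c)) :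
    hyp3F2 a b c 1 1 1 - 1 = c * ∑' m, tailCoeff a b c m := by
  have hterm : ∀ m : ℕ, (pochR a (m + 1) * pochR b (m + 1) * pochR c (m + 1)) /
      (pochR 1 (m + 1) * pochR 1 (m + 1) * ((m + 1).factorial : ℝ)) * 1 ^ (m + 1)
      = c * tailCoeff a b c m := by
    intro m
    rw [pochR_succ_left c, pochR_one, tailCoeff, one_pow]
    ring
  rw [hyp3F2, (summable_nat_add_iff 1).mp ((hs.mul_left c).congr fun m => (hterm m).symm)
    |>.tsum_eq_zero_add, tsum_congr hterm, tsum_mul_left]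
  simp [pochR_zero]

lemma tendsto_tsum_tailCoeff (ha0 : 0 ≤ a) (ha1 : a ≤ 1) (hb0 : 0 ≤ b) (hb1 : b ≤ 1)
    (hab : a + b < 2) :
    Tendsto (fun c => ∑' m, tailCoeff a b c m) (𝓝[>] 0) (𝓝 (∑' m, tailCoeff a b 0 m)) := by
  have hc : ∀ᶠ c in 𝓝[>] (0 : ℝ), c ∈ Set.Ioo 0 ((2 - a - b) / 2) :=
    Ioo_mem_nhdsGT (by linarith)
  refine tendsto_tsum_of_dominated_convergence
    ((summable_two_div_nat_add_two_rpow (q := (4 - a - b) / 2) (by linarith)).mul_left (a * b))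
    (fun m => (continuous_tailCoeff m).continuousAt.tendsto.mono_left nhdsWithin_le_nhds) ?_
  filter_upwards [hc] with c ⟨hc0, hc1⟩ m
  rw [Real.norm_of_nonneg (tailCoeff_nonneg ha0 hb0 hc0.le m)]
  exact tailCoeff_le ha0 ha1 hb0 hb1 hc0.le (by linarith) (by linarith) m

end tailCoeff

lemma tendsto_Gamma_add_one : Tendsto (fun c => Real.Gamma (c + 1)) (𝓝 0) (𝓝 1) := by
  have h := Real.differentiableOn_Gamma_Ioi.continuousOn.continuousAt (Ioi_mem_nhds one_pos)
  simpa only [Real.Gamma_one, Function.comp_def] using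
    h.tendsto.comp ((continuous_add_const (1 : ℝ)).tendsto' 0 1 (zero_add 1))

theorem stmt1 (a b : ℝ) (ha0 : 0 < a) (ha1 : a < 1) (hb0 : 0 < b) (hb1 : b < 1) :
    Tendsto (fun c : ℝ => Real.Gamma c * (hyp3F2 a b c 1 1 1 - 1))
      (𝓝[>] (0 : ℝ))
      (𝓝 (a * b * hyp4F3 (1 + a) (1 + b) 1 1 2 2 2 1)) := by
  have hlim := (tendsto_Gamma_add_one.mono_left nhdsWithin_le_nhds).mul
    (tendsto_tsum_tailCoeff ha0.le ha1.le hb0.le hb1.le (by linarith))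
  rw [one_mul, tsum_tailCoeff_zero] at hlim
  refine hlim.congr' ?_
  filter_upwards [Ioo_mem_nhdsGT (show (0 : ℝ) < (2 - a - b) / 2 by linarith)] with c ⟨hc0, hc1⟩
  rw [hyp3F2_sub_one_eq (summable_tailCoeff ha0.le ha1.le hb0.le hb1.le hc0.le (by linarith)
    (by linarith)), Real.Gamma_add_one hc0.ne', mul_comm c, mul_assoc]
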